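/- arXiv:1412.3254 — 3 statements merged into one kernel-verified Lean document; each statement's English description precedes it below -/
import Mathlib

section
/- For every pair of positive integers l and m, there exists a positive integer p such that for every set X with p elements and every partition of the l-element subsets of X into two classes R and B, there exists a subset Y of X with m elements such that all l-element subsets of Y lie in R or all lie in B. -/
open Finset

/-!
Induction on `l`, and for fixed `l + 1` on `m₀ + m₁` (Erdős–Szekeres style). Given a large set
`X`, remove a point `x` and colour each `l`-subset `s` of the rest by the colour of `insert x s`.
By the case `l` there is a large subset `Z` on which this link colouring is constant, say red; by
the case `(l + 1, m₀ - 1, m₁)` the set `Z` contains a blue set of size `m₁` or a red set of size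
`m₀ - 1`, and adding `x` to the latter gives a red set of size `m₀`. `ramseyBound` records the
sizes this argument needs.
-/

def ramseyBound : ℕ → ℕ → ℕ → ℕ
  | 0, m₀, m₁ => max m₀ m₁
  | _ + 1, 0, _ => 0
  | _ + 1, _, 0 => 0
  | l + 1, m₀ + 1, m₁ + 1 =>
    ramseyBound l (ramseyBound (l + 1) m₀ (m₁ + 1)) (ramseyBound (l + 1) (m₀ + 1) m₁) + 1

section

variable {α : Type*}

def IsHomogeneous (P : Finset α → Prop) (l : ℕ) (Y : Finset α) : Prop :=
  ∀ s ⊆ Y, #s = l → P s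

theorem IsHomogeneous.mono {P : Finset α → Prop} {l : ℕ} {Y Z : Finset α}
    (hZ : IsHomogeneous P l Z) (hYZ : Y ⊆ Z) : IsHomogeneous P l Y :=
  fun s hs => hZ s (hs.trans hYZ)

theorem isHomogeneous_empty (P : Finset α → Prop) (l : ℕ) :
    IsHomogeneous P (l + 1) ∅ := by
  intro s hs hcard
  simp [subset_empty.mp hs] at hcard

theorem isHomogeneous_zero_iff (P : Finset α → Prop) (Y : Finset α) :
    IsHomogeneous P 0 Y ↔ P ∅ := by
  refine ⟨fun h => h ∅ (empty_subset Y) card_empty, fun h s _ hs => ?_⟩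
  rwa [card_eq_zero.mp hs]

theorem IsHomogeneous.insert [DecidableEq α] {P : Finset α → Prop} {l : ℕ} {x : α}
    {Y : Finset α} (hlink : IsHomogeneous (fun s => P (insert x s)) l Y)
    (hY : IsHomogeneous P (l + 1) Y) : IsHomogeneous P (l + 1) (insert x Y) := by
  intro s hs hcard
  by_cases hxs : x ∈ s
  · rw [← insert_erase hxs]
    exact hlink _ (subset_insert_iff.mp hs) (by rw [card_erase_of_mem hxs, hcard]; rfl)
  · exact hY s ((subset_insert_iff_of_notMem hxs).mp hs) hcard

theorem exists_isHomogeneous_of_ramseyBound_le [DecidableEq α] (l m₀ m₁ : ℕ)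
    (P : Finset α → Prop) (X : Finset α) (hX : ramseyBound l m₀ m₁ ≤ #X) :
    ∃ Y ⊆ X, (m₀ ≤ #Y ∧ IsHomogeneous P l Y) ∨ (m₁ ≤ #Y ∧ IsHomogeneous (¬ P ·) l Y) := by
  induction l, m₀, m₁ using ramseyBound.induct generalizing P X with
  | case1 m₀ m₁ =>
    rw [ramseyBound] at hX
    refine ⟨X, subset_rfl, ?_⟩
    simp only [isHomogeneous_zero_iff]
    by_cases h : P ∅
    · exact .inl ⟨le_of_max_le_left hX, h⟩
    · exact .inr ⟨le_of_max_le_right hX, h⟩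
  | case2 l m₁ => exact ⟨∅, empty_subset X, .inl ⟨le_rfl, isHomogeneous_empty P l⟩⟩
  | case3 l m₀ _ => exact ⟨∅, empty_subset X, .inr ⟨le_rfl, isHomogeneous_empty _ l⟩⟩
  | case4 l m₀ m₁ ih₀ ih₁ ihlink =>
    rw [ramseyBound] at hX
    obtain ⟨x, hx⟩ : X.Nonempty := card_pos.mp (by omega)
    have hX' : ramseyBound l (ramseyBound (l + 1) m₀ (m₁ + 1))
        (ramseyBound (l + 1) (m₀ + 1) m₁) ≤ #(X.erase x) := by
      rw [card_erase_of_mem hx]; omega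
    have hinsert : ∀ Y ⊆ X.erase x, insert x Y ⊆ X ∧ #(insert x Y) = #Y + 1 := fun Y hY =>
      ⟨insert_subset hx (hY.trans (erase_subset x X)),
        card_insert_of_notMem fun hxY => notMem_erase x X (hY hxY)⟩
    obtain ⟨Z, hZX, ⟨hZ, hlink⟩ | ⟨hZ, hlink⟩⟩ := ihlink (fun s => P (insert x s)) (X.erase x) hX'
    · obtain ⟨Y, hYZ, ⟨hY, hPY⟩ | ⟨hY, hPY⟩⟩ := ih₀ P Z hZ
      · obtain ⟨hxYX, hcard⟩ := hinsert Y (hYZ.trans hZX)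
        exact ⟨insert x Y, hxYX, .inl ⟨by omega, (hlink.mono hYZ).insert hPY⟩⟩
      · exact ⟨Y, hYZ.trans (hZX.trans (erase_subset x X)), .inr ⟨hY, hPY⟩⟩
    · obtain ⟨Y, hYZ, ⟨hY, hPY⟩ | ⟨hY, hPY⟩⟩ := ih₁ P Z hZ
      · exact ⟨Y, hYZ.trans (hZX.trans (erase_subset x X)), .inl ⟨hY, hPY⟩⟩
      · obtain ⟨hxYX, hcard⟩ := hinsert Y (hYZ.trans hZX)
        exact ⟨insert x Y, hxYX, .inr ⟨by omega, (hlink.mono hYZ).insert hPY⟩⟩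

end

theorem stmt_0_general (l m : ℕ) :
    ∃ p : ℕ, 0 < p ∧ ∀ (α : Type) [DecidableEq α] (X : Finset α), X.card = p →
      ∀ R B : Finset α → Prop,
        (∀ s ⊆ X, s.card = l → R s ∨ B s) →
        ∃ Y ⊆ X, Y.card = m ∧
          ((∀ s ⊆ Y, s.card = l → R s) ∨ (∀ s ⊆ Y, s.card = l → B s)) := by
  refine ⟨ramseyBound l m m + 1, Nat.succ_pos _, fun α _ X hX R B hcover => ?_⟩
  obtain ⟨Y, hYX, ⟨hY, hRY⟩ | ⟨hY, hRY⟩⟩ :=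
    exists_isHomogeneous_of_ramseyBound_le l m m R X (by omega)
  all_goals obtain ⟨Y', hY'Y, hY'⟩ := exists_subset_card_eq hY
  · exact ⟨Y', hY'Y.trans hYX, hY', .inl (hRY.mono hY'Y)⟩
  · refine ⟨Y', hY'Y.trans hYX, hY', .inr fun s hs hcard => ?_⟩
    exact (hcover s (hs.trans (hY'Y.trans hYX)) hcard).resolve_left (hRY s (hs.trans hY'Y) hcard)

/-- Ramsey's theorem (finite version). -/
theorem stmt_0 (l m : ℕ) (hl : 0 < l) (hm : 0 < m) :
    ∃ p : ℕ, 0 < p ∧ ∀ (α : Type) [DecidableEq α] (X : Finset α), X.card = p →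
      ∀ R B : Finset α → Prop,
        (∀ s ⊆ X, s.card = l → R s ∨ B s) →
        ∃ Y ⊆ X, Y.card = m ∧
          ((∀ s ⊆ Y, s.card = l → R s) ∨ (∀ s ⊆ Y, s.card = l → B s)) :=
  stmt_0_general l m
end

section
/- If A is a finite directed graph consisting of a single directed edge and B is the directed 3-cycle, then no finite directed graph C satisfies C → (B)^A_2: for every finite directed graph C there is a 2-coloring of the directed edges of C such that every copy of the directed 3-cycle in C contains edges of both colors. -/
/-- For every finite directed graph C there is a 2-coloring of its directed edges such that
every directed 3-cycle in C contains edges of both colors; hence no finite directed graph C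
satisfies C → (3-cycle)^(edge)_2. -/
theorem stmt_5 (V : Type) [Fintype V] (E : V → V → Prop)
    (hirr : ∀ x, ¬ E x x) (hanti : ∀ x y, E x y → ¬ E y x) :
    ∃ c : V → V → Bool, ∀ x y z : V, E x y → E y z → E z x →
      ¬ (c x y = c y z ∧ c y z = c z x) := by
  classical
  let e := Fintype.equivFin V
  set f : V → ℕ := fun v => (e v : ℕ) with hfdef
  have hf : Function.Injective f := fun a b h => e.injective (Fin.ext h)
  refine ⟨fun x y => decide (f x < f y), ?_⟩
  rintro x y z hxy hyz hzx ⟨h1, h2⟩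
  rw [decide_eq_decide] at h1 h2
  by_cases h : f x < f y
  · exact lt_irrefl _ ((h.trans (h1.mp h)).trans (h2.mp (h1.mp h)))
  · have h1' : ¬ f y < f z := fun hh => h (h1.mpr hh)
    have h2' : ¬ f z < f x := fun hh => h1' (h2.mpr hh)
    have : f x = f y := le_antisymm ((le_of_not_gt h2').trans (le_of_not_gt h1')) (le_of_not_gt h)
    exact hirr x (hf this ▸ hxy)
end

section
/- Let K be a class of finite structures, each rigid (having trivial automorphism group), which has the hereditary property, the joint embedding property, and the Ramsey property. Then K has the amalgamation property. -/
open FirstOrder Language CategoryTheory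

/-- `C` arrows `(B)` over `A` with `k` colors: every `k`-coloring of the copies of `A`
in `C` (substructures of `C` isomorphic to `A`) is constant on the copies of `A` lying
inside some copy of `B` in `C`. -/
def Arrows (L : Language) (C A B : Bundled L.Structure) (k : ℕ) : Prop :=
  ∀ c : {S : L.Substructure C // Nonempty (S ≃[L] A)} → Fin k,
    ∃ B' : L.Substructure C, Nonempty (B' ≃[L] B) ∧
      ∀ S T : {S : L.Substructure C // Nonempty (S ≃[L] A)},
        S.1 ≤ B' → T.1 ≤ B' → c S = c T

/-- The Ramsey property for a class of structures. -/
def RamseyProp (L : Language) (K : Set (Bundled L.Structure)) : Prop :=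
  ∀ (k : ℕ) (A B : Bundled L.Structure), A ∈ K → B ∈ K →
    ∃ C ∈ K, Arrows L C A B k

/-- An `L`-equivalence between equal substructures. -/
def substructEquivOfEq {L : Language} {C : Type*} [L.Structure C]
    {S T : L.Substructure C} (h : S = T) : S ≃[L] T := by
  subst h; exact FirstOrder.Language.Equiv.refl L S

@[simp] theorem substructEquivOfEq_coe {L : Language} {C : Type*} [L.Structure C]
    {S T : L.Substructure C} (h : S = T) (x : S) :
    ((substructEquivOfEq h x : T) : C) = (x : C) := by
  subst h; rfl

/-- If the target of two embeddings of a rigid structure have the same range, the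
embeddings are equal. -/
theorem emb_eq_of_range_eq {L : Language} {M C : Type*} [L.Structure M] [L.Structure C]
    (hrigid : ∀ f : M ≃[L] M, ∀ x : M, f x = x)
    (h₁ h₂ : M ↪[L] C) (h : h₁.toHom.range = h₂.toHom.range) : h₁ = h₂ := by
  ext x
  set e : M ≃[L] M :=
    h₂.equivRange.symm.comp ((substructEquivOfEq h).comp h₁.equivRange) with he
  have h1 : h₂ (e x) = h₁ x := by
    have key : ((h₂.equivRange (e x) : h₂.toHom.range) : C)
        = ((substructEquivOfEq h (h₁.equivRange x) : h₂.toHom.range) : C) := by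
      rw [he]; simp only [Equiv.comp_apply]; rw [h₂.equivRange.apply_symm_apply]
    rw [Embedding.equivRange_apply] at key
    rw [key, substructEquivOfEq_coe, Embedding.equivRange_apply]
  rw [hrigid e x] at h1
  exact h1.symm

/-- Nešetřil–Rödl: a class of rigid finite structures with the hereditary property, the
joint embedding property and the Ramsey property has the amalgamation property. -/
theorem stmt_7 (L : Language) (K : Set (Bundled L.Structure))
    (hfin : ∀ M ∈ K, Finite M)
    (hrigid : ∀ M ∈ K, ∀ f : M ≃[L] M, ∀ x : M, f x = x)
    (hHP : Language.Hereditary K) (hJEP : Language.JointEmbedding K)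
    (hRP : RamseyProp L K) :
    Language.Amalgamation K := by
  classical
  intro M N P MN MP hM hN hP
  obtain ⟨D, hD, ⟨e₀⟩, ⟨e₁⟩⟩ := hJEP N hN P hP
  obtain ⟨C, hC, hArr⟩ := hRP 2 M D hM hD
  -- color a copy of M in C by whether it is the image of MN followed by an embedding of N
  set c : {S : L.Substructure C // Nonempty (S ≃[L] M)} → Fin 2 :=
    fun S => if ∃ g : N ↪[L] C, (g.comp MN).toHom.range = S.1 then 0 else 1 with hc
  obtain ⟨B', ⟨φ⟩, hmono⟩ := hArr c
  set ι : B' ↪[L] C := B'.subtype with hι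
  set g₀ : N ↪[L] C := ι.comp (φ.symm.toEmbedding.comp e₀) with hg₀
  set g₁ : P ↪[L] C := ι.comp (φ.symm.toEmbedding.comp e₁) with hg₁
  have hle : ∀ (X : Type _) [L.Structure X] (f : X ↪[L] B'),
      (ι.comp f).toHom.range ≤ B' := by
    intro X _ f
    rintro _ ⟨x, rfl⟩
    exact (f x).2
  set S₀ : {S : L.Substructure C // Nonempty (S ≃[L] M)} :=
    ⟨(g₀.comp MN).toHom.range, ⟨(g₀.comp MN).equivRange.symm⟩⟩ with hS₀def
  set S₁ : {S : L.Substructure C // Nonempty (S ≃[L] M)} :=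
    ⟨(g₁.comp MP).toHom.range, ⟨(g₁.comp MP).equivRange.symm⟩⟩ with hS₁def
  have hS₀ : S₀.1 ≤ B' := by
    have := hle M ((φ.symm.toEmbedding.comp e₀).comp MN)
    rwa [← Embedding.comp_assoc] at this
  have hS₁ : S₁.1 ≤ B' := by
    have := hle M ((φ.symm.toEmbedding.comp e₁).comp MP)
    rwa [← Embedding.comp_assoc] at this
  have hcS₀ : c S₀ = 0 := by
    rw [hc]
    exact if_pos ⟨g₀, rfl⟩
  have hcS₁ : c S₁ = 0 := (hmono S₁ S₀ hS₁ hS₀).trans hcS₀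
  have hex : ∃ g : N ↪[L] C, (g.comp MN).toHom.range = S₁.1 := by
    by_contra hcon
    rw [hc] at hcS₁
    simp only [if_neg hcon] at hcS₁
    exact one_ne_zero hcS₁
  obtain ⟨g, hg⟩ := hex
  refine ⟨C, g, g₁, hC, ?_⟩
  exact emb_eq_of_range_eq (hrigid M hM) (g.comp MN) (g₁.comp MP) hg
end
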